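/- Let A be an algebra of (S,φ)-type with respect to a presentation (π,P), and suppose there exists a section τ: S → ℕ^n of π (i.e. π ∘ τ = id_S) such that {𝐛^{τ(s)} : s ∈ S} is linearly independent over k. Then {𝐛^{τ(s)} : s ∈ S} is a basis of A, and A is isomorphic to the quotient of the free algebra on X_1,...,X_n by the ideal generated by the elements X_j X_i − c_{i,j} X_i X_j − Σ_{φ̃(ξ)<φ(s_i+s_j)} c_ξ^{i,j} X^ξ (for 1 ≤ i < j ≤ n) and X^{p_i'} − d_i X^{p_i} − Σ_{φ̃(ξ)<φ̃(p_i)} d_ξ^i X^ξ (for 1 ≤ i ≤ m), where X^ξ = X_1^{ξ_1} ⋯ X_n^{ξ_n}. -/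

import Mathlib

/-!
Let `F_{<l}` (`lowerSpan`) be the span of all words in the `bᵢ` of weight `< l`, weights
measured by `φ`. It is multiplicative by construction: a word of weight `w` times `F_{<l}` lies
in `F_{<w+l}`. Moving letters into place with the commutation relations shows that every word
equals, up to a nonzero scalar and an element of `F_{<weight}` (`EqUpToLower`), the ordered
monomial `𝐛^ξ` of its exponent. Following the congruence generated by `P` with the straightening
relations shows that `𝐛^ξ` and `𝐛^ν` agree in the same sense whenever `π ξ = π ν`; the nonzero
scalars `c_{i,j}` and `d_i` make this relation symmetric and compatible with addition. Induction
on the weight then puts every word, hence all of `A`, into the span of the `𝐛^{τ(t)}`.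

The quotient of the free algebra satisfies the same relations, so its monomials `𝐛^{τ(t)}` span
it as well; their images in `A` are linearly independent, so the canonical surjection onto `A`
is injective.
-/

/-- Ordered monomial `𝐛^ξ = b₁^{ξ₁} ⋯ bₙ^{ξₙ}` in a (noncommutative) ring. -/
noncomputable def bpow {A : Type} [Ring A] {n : ℕ} (b : Fin n → A) (ξ : Fin n → ℕ) : A :=
  ((List.finRange n).map fun i => b i ^ ξ i).prod

/-- The canonical map `π : ℕ^n → S`, `ξ ↦ Σ ξ i • s i`. -/
def piMap {S : Type} [AddCommMonoid S] {n : ℕ} (s : Fin n → S) (ξ : Fin n → ℕ) : S :=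
  ∑ i, ξ i • s i

/-- The filtration layer `F_l A = span { 𝐛^ξ : φ̃(ξ) ≤ l }`. -/
noncomputable def typeFilt (k : Type) [Field k] {A : Type} [Ring A] [Algebra k A]
    {S : Type} [AddCommMonoid S] {n : ℕ} (s : Fin n → S) (φ : S →+ ℕ)
    (b : Fin n → A) (l : ℕ) : Submodule k A :=
  Submodule.span k {x | ∃ ξ : Fin n → ℕ, φ (piMap s ξ) ≤ l ∧ x = bpow b ξ}


/-- Ordered monomial `X^ξ = X₁^{ξ₁} ⋯ Xₙ^{ξₙ}` in the free algebra. -/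
noncomputable def Xpow (k : Type) [Field k] {n : ℕ} (ξ : Fin n → ℕ) :
    FreeAlgebra k (Fin n) :=
  ((List.finRange n).map fun i => FreeAlgebra.ι k i ^ ξ i).prod

/-- The commutation and straightening relations of an `(S,φ)`-type algebra on
the free algebra on `X₁, ..., Xₙ`; quotienting the free algebra by the relation
(`RingQuot`) is the same as quotienting by the two-sided ideal they generate. -/
noncomputable def relRel (k : Type) [Field k] (n m : ℕ)
    (c : Fin n → Fin n → k) (cc : Fin n → Fin n → ((Fin n → ℕ) →₀ k))
    (P : Fin m → (Fin n → ℕ) × (Fin n → ℕ)) (d : Fin m → k)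
    (dd : Fin m → ((Fin n → ℕ) →₀ k)) :
    FreeAlgebra k (Fin n) → FreeAlgebra k (Fin n) → Prop := fun a b =>
  (∃ i j : Fin n, i < j ∧ a = FreeAlgebra.ι k j * FreeAlgebra.ι k i ∧
      b = c i j • (FreeAlgebra.ι k i * FreeAlgebra.ι k j)
        + (cc i j).sum fun ξ x => x • Xpow k ξ) ∨
  (∃ i : Fin m, a = Xpow k (P i).2 ∧
      b = d i • Xpow k (P i).1 + (dd i).sum fun ξ x => x • Xpow k ξ)

namespace SPhiType

open Submodule

variable {n : ℕ}

section Words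

def word (ξ : Fin n → ℕ) : List (Fin n) :=
  (List.finRange n).flatMap fun i => List.replicate (ξ i) i

def exponent (L : List (Fin n)) : Fin n → ℕ := fun i => L.count i

lemma exponent_cons (a : Fin n) (L : List (Fin n)) :
    exponent (a :: L) = exponent L + Pi.single a 1 := by
  funext i
  rcases eq_or_ne i a with rfl | h
  · simp [exponent]
  · simp [exponent, h, Ne.symm h]

lemma exponent_append (L M : List (Fin n)) : exponent (L ++ M) = exponent L + exponent M := by
  funext i
  simp [exponent, List.count_append]

lemma exponent_word (ξ : Fin n → ℕ) : exponent (word ξ) = ξ := by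
  funext i
  simp [exponent, word, List.count_flatMap, List.count_replicate, Function.comp_def,
    ← Fin.sum_univ_def]

lemma pairwise_le_word (ξ : Fin n → ℕ) : (word ξ).Pairwise (· ≤ ·) := by
  refine List.pairwise_flatMap.mpr ⟨fun i _ => ?_, ?_⟩
  · exact List.pairwise_replicate.mpr (Or.inr le_rfl)
  · refine (List.pairwise_lt_finRange n).imp fun hij x hx y hy => ?_
    rw [(List.mem_replicate.mp hx).2, (List.mem_replicate.mp hy).2]
    exact hij.le

lemma word_add_single (ξ : Fin n → ℕ) (a : Fin n) :
    word (ξ + Pi.single a 1) = (word ξ).orderedInsert (· ≤ ·) a := by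
  refine List.Perm.eq_of_pairwise' (pairwise_le_word _)
    ((pairwise_le_word ξ).orderedInsert _ _) ?_
  refine List.perm_iff_count.mpr fun i => ?_
  rw [(List.perm_orderedInsert _ a _).count_eq]
  have h : exponent (word (ξ + Pi.single a 1)) = exponent (a :: word ξ) := by
    rw [exponent_cons, exponent_word, exponent_word]
  exact congrFun h i

lemma exists_word_add_single_eq (ξ : Fin n → ℕ) (a : Fin n) :
    ∃ Lo Hi : List (Fin n), word ξ = Lo ++ Hi ∧
      word (ξ + Pi.single a 1) = Lo ++ a :: Hi ∧ ∀ j ∈ Lo, j < a := by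
  refine ⟨_, _, (List.takeWhile_append_dropWhile (p := fun j => decide ¬a ≤ j)).symm,
    (word_add_single ξ a).trans (List.orderedInsert_eq_take_drop _ _ _), fun j hj => ?_⟩
  simpa using List.mem_takeWhile_imp hj

end Words

section Products

variable {A : Type} [Ring A] (b : Fin n → A)

def wordProd (L : List (Fin n)) : A := (L.map b).prod

@[simp] lemma wordProd_nil : wordProd b [] = 1 := rfl

@[simp] lemma wordProd_cons (a : Fin n) (L : List (Fin n)) :
    wordProd b (a :: L) = b a * wordProd b L := List.prod_cons

@[simp] lemma wordProd_append (L M : List (Fin n)) :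
    wordProd b (L ++ M) = wordProd b L * wordProd b M := by
  simp [wordProd]

lemma bpow_eq_wordProd (ξ : Fin n → ℕ) : bpow b ξ = wordProd b (word ξ) := by
  simp [bpow, wordProd, word, List.flatMap, List.prod_flatten, Function.comp_def]

lemma map_bpow {B : Type} {F : Type*} [Ring B] [FunLike F A B] [MonoidHomClass F A B] (f : F)
    (ξ : Fin n → ℕ) : f (bpow b ξ) = bpow (fun i => f (b i)) ξ := by
  simp [bpow, map_list_prod, Function.comp_def]

lemma span_range_wordProd (k : Type*) [CommSemiring k] [Algebra k A]
    (hgen : Algebra.adjoin k (Set.range b) = ⊤) : span k (Set.range (wordProd b)) = ⊤ := by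
  rw [eq_top_iff, ← Algebra.top_toSubmodule, ← hgen, Algebra.adjoin_eq_span]
  refine span_mono fun x hx => ?_
  induction hx using Submonoid.closure_induction with
  | mem _ h => obtain ⟨i, rfl⟩ := h; exact ⟨[i], by simp⟩
  | one => exact ⟨[], rfl⟩
  | mul _ _ _ _ hx hy =>
    obtain ⟨L, rfl⟩ := hx
    obtain ⟨M, rfl⟩ := hy
    exact ⟨L ++ M, wordProd_append b L M⟩

end Products

section Weight

variable {S : Type} [AddCommMonoid S] (s : Fin n → S) (φ : S →+ ℕ)

def weight (L : List (Fin n)) : ℕ := φ (L.map s).sum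

@[simp] lemma weight_nil : weight s φ [] = 0 := by simp [weight]

@[simp] lemma weight_cons (a : Fin n) (L : List (Fin n)) :
    weight s φ (a :: L) = φ (s a) + weight s φ L := by simp [weight]

@[simp] lemma weight_append (L M : List (Fin n)) :
    weight s φ (L ++ M) = weight s φ L + weight s φ M := by simp [weight]

lemma piMap_add (ξ η : Fin n → ℕ) : piMap s (ξ + η) = piMap s ξ + piMap s η := by
  simp [piMap, add_smul, Finset.sum_add_distrib]

lemma piMap_single (a : Fin n) : piMap s (Pi.single a 1) = s a := by
  simp [piMap, Pi.single_apply]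

lemma piMap_exponent (L : List (Fin n)) : piMap s (exponent L) = (L.map s).sum := by
  induction L with
  | nil => simp [piMap, exponent]
  | cons a L ih =>
    rw [exponent_cons, piMap_add, ih, piMap_single, List.map_cons, List.sum_cons, add_comm]

lemma weight_word (ξ : Fin n → ℕ) : weight s φ (word ξ) = φ (piMap s ξ) := by
  rw [weight, ← piMap_exponent, exponent_word]

lemma weight_word_exponent (L : List (Fin n)) : weight s φ (word (exponent L)) = weight s φ L := by
  rw [weight_word, piMap_exponent, weight]

end Weight

section Relations

variable {k A : Type} [CommSemiring k] [Ring A] [Algebra k A] {m : ℕ}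

def CommRelations (c : Fin n → Fin n → k) (cc : Fin n → Fin n → ((Fin n → ℕ) →₀ k))
    (b : Fin n → A) : Prop :=
  ∀ i j : Fin n, i < j → b j * b i = c i j • (b i * b j) + (cc i j).sum fun ξ a => a • bpow b ξ

def StraighteningRelations (P : Fin m → (Fin n → ℕ) × (Fin n → ℕ)) (d : Fin m → k)
    (dd : Fin m → ((Fin n → ℕ) →₀ k)) (b : Fin n → A) : Prop :=
  ∀ i : Fin m, bpow b (P i).2 = d i • bpow b (P i).1 + (dd i).sum fun ξ a => a • bpow b ξ

end Relations

section LowerSpan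

variable (k : Type) [CommSemiring k] {A : Type} [Ring A] [Algebra k A] {S : Type}
  [AddCommMonoid S] (s : Fin n → S) (φ : S →+ ℕ) (b : Fin n → A)

def lowerSpan (l : ℕ) : Submodule k A := span k (wordProd b '' {L | weight s φ L < l})

variable {k s φ b} {l l' : ℕ}

lemma lowerSpan_mono (h : l ≤ l') : lowerSpan k s φ b l ≤ lowerSpan k s φ b l' :=
  span_mono (Set.image_mono fun _ hL => lt_of_lt_of_le hL h)

lemma wordProd_mem_lowerSpan {L : List (Fin n)} (h : weight s φ L < l) :
    wordProd b L ∈ lowerSpan k s φ b l :=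
  subset_span ⟨L, h, rfl⟩

lemma bpow_mem_lowerSpan {ξ : Fin n → ℕ} (h : φ (piMap s ξ) < l) :
    bpow b ξ ∈ lowerSpan k s φ b l := by
  rw [bpow_eq_wordProd]
  exact wordProd_mem_lowerSpan (by rwa [weight_word])

lemma sum_smul_bpow_mem_lowerSpan {f : (Fin n → ℕ) →₀ k}
    (hf : ∀ ξ, f ξ ≠ 0 → φ (piMap s ξ) < l) :
    (f.sum fun ξ a => a • bpow b ξ) ∈ lowerSpan k s φ b l :=
  sum_mem fun ξ hξ => smul_mem _ _ (bpow_mem_lowerSpan (hf ξ (Finsupp.mem_support_iff.mp hξ)))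

lemma lowerSpan_le_comap {f : A →ₗ[k] A}
    (hf : ∀ L, weight s φ L < l → f (wordProd b L) ∈ lowerSpan k s φ b l') :
    lowerSpan k s φ b l ≤ (lowerSpan k s φ b l').comap f :=
  span_le.mpr <| by rintro _ ⟨L, hL, rfl⟩; exact hf L hL

lemma wordProd_mul_mem_lowerSpan {z : A} (L : List (Fin n)) (hz : z ∈ lowerSpan k s φ b l)
    (h : weight s φ L + l ≤ l') : wordProd b L * z ∈ lowerSpan k s φ b l' :=
  lowerSpan_le_comap (f := LinearMap.mulLeft k (wordProd b L)) (fun M hM => by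
    rw [LinearMap.mulLeft_apply, ← wordProd_append]
    exact wordProd_mem_lowerSpan (by rw [weight_append]; omega)) hz

lemma mul_wordProd_mem_lowerSpan {z : A} (M : List (Fin n)) (hz : z ∈ lowerSpan k s φ b l)
    (h : l + weight s φ M ≤ l') : z * wordProd b M ∈ lowerSpan k s φ b l' :=
  lowerSpan_le_comap (f := LinearMap.mulRight k (wordProd b M)) (fun L hL => by
    rw [LinearMap.mulRight_apply, ← wordProd_append]
    exact wordProd_mem_lowerSpan (by rw [weight_append]; omega)) hz

end LowerSpan

section EqUpToLower

variable (k : Type) [Field k] {A : Type} [Ring A] [Algebra k A] {S : Type} [AddCommMonoid S]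
  (s : Fin n → S) (φ : S →+ ℕ) (b : Fin n → A)

def EqUpToLower (l : ℕ) (x y : A) : Prop := ∃ u : k, u ≠ 0 ∧ x - u • y ∈ lowerSpan k s φ b l

namespace EqUpToLower

variable {k s φ b} {l l' : ℕ} {x y z : A}

lemma refl (l : ℕ) (x : A) : EqUpToLower k s φ b l x x :=
  ⟨1, one_ne_zero, by simp⟩

lemma symm (h : EqUpToLower k s φ b l x y) : EqUpToLower k s φ b l y x := by
  obtain ⟨u, hu, h⟩ := h
  refine ⟨u⁻¹, inv_ne_zero hu, ?_⟩
  have e : y - u⁻¹ • x = -u⁻¹ • (x - u • y) := by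
    rw [smul_sub, smul_smul, neg_mul, inv_mul_cancel₀ hu, neg_smul, neg_smul, one_smul]
    abel
  rw [e]
  exact smul_mem _ _ h

lemma trans (h₁ : EqUpToLower k s φ b l x y) (h₂ : EqUpToLower k s φ b l y z) :
    EqUpToLower k s φ b l x z := by
  obtain ⟨u, hu, h₁⟩ := h₁
  obtain ⟨v, hv, h₂⟩ := h₂
  refine ⟨u * v, mul_ne_zero hu hv, ?_⟩
  have e : x - (u * v) • z = (x - u • y) + u • (y - v • z) := by
    rw [smul_sub, smul_smul]
    abel
  rw [e]
  exact add_mem h₁ (smul_mem _ _ h₂)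

lemma wordProd_mul (h : EqUpToLower k s φ b l x y) (L : List (Fin n))
    (hl : weight s φ L + l ≤ l') :
    EqUpToLower k s φ b l' (wordProd b L * x) (wordProd b L * y) := by
  obtain ⟨u, hu, h⟩ := h
  exact ⟨u, hu, by rw [← mul_smul_comm, ← mul_sub]; exact wordProd_mul_mem_lowerSpan L h hl⟩

lemma mul_wordProd (h : EqUpToLower k s φ b l x y) (M : List (Fin n))
    (hl : l + weight s φ M ≤ l') :
    EqUpToLower k s φ b l' (x * wordProd b M) (y * wordProd b M) := by
  obtain ⟨u, hu, h⟩ := h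
  exact ⟨u, hu, by rw [← smul_mul_assoc, ← sub_mul]; exact mul_wordProd_mem_lowerSpan M h hl⟩

lemma mem_of_mem (h : EqUpToLower k s φ b l x y) {p : Submodule k A}
    (hl : lowerSpan k s φ b l ≤ p) (hy : y ∈ p) : x ∈ p := by
  obtain ⟨u, -, h⟩ := h
  simpa using add_mem (hl h) (smul_mem p u hy)

end EqUpToLower

end EqUpToLower

section Spanning

variable {k : Type} [Field k] {A : Type} [Ring A] [Algebra k A] {S : Type} [AddCommMonoid S]
  {s : Fin n → S} {φ : S →+ ℕ} {b : Fin n → A}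
  {c : Fin n → Fin n → k} {cc : Fin n → Fin n → ((Fin n → ℕ) →₀ k)}
  (hc : ∀ i j, c i j ≠ 0) (hccsupp : ∀ i j ξ, cc i j ξ ≠ 0 → φ (piMap s ξ) < φ (s i + s j))
  (hcomm : CommRelations c cc b)
variable {m : ℕ} {P : Fin m → (Fin n → ℕ) × (Fin n → ℕ)} {d : Fin m → k}
  {dd : Fin m → ((Fin n → ℕ) →₀ k)}
  (hd : ∀ i, d i ≠ 0) (hddsupp : ∀ i ξ, dd i ξ ≠ 0 → φ (piMap s ξ) < φ (piMap s (P i).1))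
  (hstr : StraighteningRelations P d dd b)
  (hP : ∀ ξ ν : Fin n → ℕ,
    addConGen (fun a b => ∃ i : Fin m, a = (P i).1 ∧ b = (P i).2) ξ ν ↔ piMap s ξ = piMap s ν)

include hd hddsupp hstr in
lemma eqUpToLower_straighten (i : Fin m) :
    EqUpToLower k s φ b (φ (piMap s (P i).1)) (bpow b (P i).1) (bpow b (P i).2) :=
  EqUpToLower.symm ⟨d i, hd i, by
    rw [hstr i, add_sub_cancel_left]
    exact sum_smul_bpow_mem_lowerSpan (hddsupp i)⟩

include hc hccsupp hcomm

lemma eqUpToLower_mul_comm {i j : Fin n} (hij : i < j) :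
    EqUpToLower k s φ b (φ (s i + s j)) (b j * b i) (b i * b j) :=
  ⟨c i j, hc i j, by
    rw [hcomm i j hij, add_sub_cancel_left]
    exact sum_smul_bpow_mem_lowerSpan (hccsupp i j)⟩

lemma eqUpToLower_mul_wordProd_comm (a : Fin n) :
    ∀ M : List (Fin n), (∀ j ∈ M, j < a) →
      EqUpToLower k s φ b (weight s φ (a :: M)) (b a * wordProd b M) (wordProd b M * b a)
  | [], _ => by simpa using EqUpToLower.refl (weight s φ [a]) (b a)
  | j :: M, hM => by
    have hswap := (eqUpToLower_mul_comm hc hccsupp hcomm (hM j List.mem_cons_self)).mul_wordProd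
      M (l' := weight s φ (a :: j :: M)) (by simp; omega)
    have hpass := (eqUpToLower_mul_wordProd_comm a M fun x hx => hM x (by simp [hx])).wordProd_mul
      [j] (l' := weight s φ (a :: j :: M)) (by simp; omega)
    simp only [wordProd_cons, wordProd_nil, mul_one, mul_assoc] at hswap hpass ⊢
    exact hswap.trans hpass

lemma eqUpToLower_wordProd_bpow_exponent :
    ∀ L : List (Fin n), EqUpToLower k s φ b (weight s φ L) (wordProd b L) (bpow b (exponent L))
  | [] => by simpa [exponent, bpow] using EqUpToLower.refl 0 (1 : A)
  | a :: L => by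
    obtain ⟨Lo, Hi, hw, hw', hLo⟩ := exists_word_add_single_eq (exponent L) a
    have hweight : weight s φ Lo + weight s φ Hi = weight s φ L := by
      rw [← weight_append, ← hw, weight_word_exponent]
    have hhead := (eqUpToLower_wordProd_bpow_exponent L).wordProd_mul [a]
      (l' := weight s φ (a :: L)) (by simp)
    have hmove := (eqUpToLower_mul_wordProd_comm hc hccsupp hcomm a Lo hLo).mul_wordProd Hi
      (l' := weight s φ (a :: L)) (by simp; omega)
    rw [bpow_eq_wordProd, hw] at hhead
    rw [exponent_cons, bpow_eq_wordProd, hw']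
    simp only [wordProd_cons, wordProd_nil, wordProd_append, mul_one, mul_assoc] at hhead hmove ⊢
    exact hhead.trans hmove

lemma eqUpToLower_bpow_mul_bpow (ξ η : Fin n → ℕ) :
    EqUpToLower k s φ b (φ (piMap s ξ) + φ (piMap s η)) (bpow b ξ * bpow b η)
      (bpow b (ξ + η)) := by
  have h := eqUpToLower_wordProd_bpow_exponent hc hccsupp hcomm (word ξ ++ word η)
  rwa [exponent_append, exponent_word, exponent_word, weight_append, weight_word, weight_word,
    wordProd_append, ← bpow_eq_wordProd, ← bpow_eq_wordProd] at h

lemma eqUpToLower_bpow_add {w x y z : Fin n → ℕ}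
    (hwx : EqUpToLower k s φ b (φ (piMap s w)) (bpow b w) (bpow b x))
    (hyz : EqUpToLower k s φ b (φ (piMap s y)) (bpow b y) (bpow b z))
    (hxw : φ (piMap s x) = φ (piMap s w)) (hzy : φ (piMap s z) = φ (piMap s y)) :
    EqUpToLower k s φ b (φ (piMap s (w + y))) (bpow b (w + y)) (bpow b (x + z)) := by
  have hfactors : EqUpToLower k s φ b (φ (piMap s w) + φ (piMap s y))
      (bpow b w * bpow b y) (bpow b x * bpow b z) := by
    have h₁ := hwx.mul_wordProd (word y) (l' := φ (piMap s w) + φ (piMap s y))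
      (by rw [weight_word])
    have h₂ := hyz.wordProd_mul (word x) (l' := φ (piMap s w) + φ (piMap s y))
      (by rw [weight_word, hxw])
    simp only [← bpow_eq_wordProd] at h₁ h₂
    exact h₁.trans h₂
  have hwy := eqUpToLower_bpow_mul_bpow hc hccsupp hcomm w y
  have hxz := eqUpToLower_bpow_mul_bpow hc hccsupp hcomm x z
  rw [hxw, hzy] at hxz
  rw [piMap_add, map_add]
  exact hwy.symm.trans (hfactors.trans hxz)

include hd hddsupp hstr hP in
lemma eqUpToLower_bpow_of_piMap_eq {ξ ν : Fin n → ℕ} (h : piMap s ξ = piMap s ν) :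
    EqUpToLower k s φ b (φ (piMap s ξ)) (bpow b ξ) (bpow b ν) := by
  have hrel := (hP ξ ν).mpr h
  clear h
  induction hrel with
  | of x y hxy =>
    obtain ⟨i, rfl, rfl⟩ := hxy
    exact eqUpToLower_straighten hd hddsupp hstr i
  | refl x => exact .refl _ _
  | symm hxy ih =>
    rw [← (hP _ _).mp hxy]
    exact ih.symm
  | trans hxy _ ih₁ ih₂ =>
    rw [(hP _ _).mp hxy] at ih₁ ⊢
    exact ih₁.trans ih₂
  | add hwx hyz ih₁ ih₂ =>
    exact eqUpToLower_bpow_add hc hccsupp hcomm ih₁ ih₂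
      (by rw [(hP _ _).mp hwx]) (by rw [(hP _ _).mp hyz])

include hd hddsupp hstr hP in
theorem span_range_bpow_section_eq_top {τ : S → (Fin n → ℕ)} (hτ : ∀ t, piMap s (τ t) = t)
    (hgen : Algebra.adjoin k (Set.range b) = ⊤) :
    span k (Set.range fun t => bpow b (τ t)) = ⊤ := by
  set G := span k (Set.range fun t => bpow b (τ t))
  have hlower : ∀ l, lowerSpan k s φ b l ≤ G := by
    intro l
    induction l with
    | zero => exact span_le.mpr (by rintro _ ⟨L, hL, -⟩; exact absurd hL (Nat.not_lt_zero _))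
    | succ l ih =>
      refine span_le.mpr ?_
      rintro _ ⟨L, hL, rfl⟩
      have hle : lowerSpan k s φ b (weight s φ L) ≤ G :=
        (lowerSpan_mono (Nat.lt_succ_iff.mp hL)).trans ih
      have hsection := eqUpToLower_bpow_of_piMap_eq hc hccsupp hcomm hd hddsupp hstr hP
        (hτ (piMap s (exponent L))).symm
      rw [piMap_exponent] at hsection
      exact (eqUpToLower_wordProd_bpow_exponent hc hccsupp hcomm L).mem_of_mem hle
        (hsection.mem_of_mem hle (subset_span ⟨_, rfl⟩))
  rw [eq_top_iff, ← span_range_wordProd b k hgen, span_le]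
  rintro _ ⟨L, rfl⟩
  exact hlower _ (wordProd_mem_lowerSpan (Nat.lt_succ_self _))

end Spanning


theorem injective_of_span_eq_top_of_linearIndependent_comp {k M N ι : Type*} [CommRing k]
    [AddCommGroup M] [Module k M] [AddCommGroup N] [Module k N] {v : ι → M}
    (hv : span k (Set.range v) = ⊤) (f : M →ₗ[k] N) (hfv : LinearIndependent k (f ∘ v)) :
    Function.Injective f := by
  let B := Module.Basis.mk (hfv.of_comp f) hv.ge
  have hf : f = B.constr k (f ∘ v) := B.ext fun i => by
    rw [B.constr_basis, Module.Basis.mk_apply]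
    rfl
  rw [hf]
  exact B.injective_constr_of_linearIndependent hfv

section Presentation

variable {k : Type} [Field k] {m : ℕ} {c : Fin n → Fin n → k}
  {cc : Fin n → Fin n → ((Fin n → ℕ) →₀ k)} {P : Fin m → (Fin n → ℕ) × (Fin n → ℕ)}
  {d : Fin m → k} {dd : Fin m → ((Fin n → ℕ) →₀ k)} {B : Type} [Ring B] [Algebra k B]

lemma forall_relRel_imp_eq_iff (f : FreeAlgebra k (Fin n) →ₐ[k] B) :
    (∀ x y, relRel k n m c cc P d dd x y → f x = f y) ↔
      CommRelations c cc (fun i => f (FreeAlgebra.ι k i)) ∧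
        StraighteningRelations P d dd (fun i => f (FreeAlgebra.ι k i)) := by
  have hX : ∀ ξ, f (Xpow k ξ) = bpow (fun i => f (FreeAlgebra.ι k i)) ξ :=
    map_bpow (FreeAlgebra.ι k) f
  constructor
  · intro h
    refine ⟨fun i j hij => ?_, fun i => ?_⟩
    · simpa [map_finsuppSum, hX] using h _ _ (Or.inl ⟨i, j, hij, rfl, rfl⟩)
    · simpa [map_finsuppSum, hX] using h _ _ (Or.inr ⟨i, rfl, rfl⟩)
  · rintro ⟨hcomm, hstr⟩ x y (⟨i, j, hij, rfl, rfl⟩ | ⟨i, rfl, rfl⟩)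
    · simpa [map_finsuppSum, hX] using hcomm i j hij
    · simpa [map_finsuppSum, hX] using hstr i

lemma adjoin_range_ι_eq_top_of_surjective {f : FreeAlgebra k (Fin n) →ₐ[k] B}
    (hf : Function.Surjective f) :
    Algebra.adjoin k (Set.range fun i => f (FreeAlgebra.ι k i)) = ⊤ := by
  rw [Set.range_comp' f, ← AlgHom.map_adjoin, FreeAlgebra.adjoin_range_ι, Algebra.map_top,
    AlgHom.range_eq_top]
  exact hf

end Presentation

end SPhiType

open SPhiType

theorem s_phi_type_presentation_general
    (k : Type) [Field k] (A : Type) [Ring A] [Algebra k A]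
    (S : Type) [AddCancelCommMonoid S]
    (n m : ℕ) (s : Fin n → S)
    (φ : S →+ ℕ)
    (P : Fin m → (Fin n → ℕ) × (Fin n → ℕ))
    (hP : ∀ ξ ν : Fin n → ℕ,
      addConGen (fun a b => ∃ i : Fin m, a = (P i).1 ∧ b = (P i).2) ξ ν ↔
        piMap s ξ = piMap s ν)
    (b : Fin n → A) (hgen : Algebra.adjoin k (Set.range b) = ⊤)
    (c : Fin n → Fin n → k) (hc : ∀ i j : Fin n, c i j ≠ 0)
    (cc : Fin n → Fin n → ((Fin n → ℕ) →₀ k))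
    (hccsupp : ∀ (i j : Fin n) (ξ : Fin n → ℕ), cc i j ξ ≠ 0 →
      φ (piMap s ξ) < φ (s i + s j))
    (hcomm : ∀ i j : Fin n, i < j →
      b j * b i = c i j • (b i * b j) + (cc i j).sum fun ξ a => a • bpow b ξ)
    (d : Fin m → k) (hd : ∀ i, d i ≠ 0)
    (dd : Fin m → ((Fin n → ℕ) →₀ k))
    (hddsupp : ∀ (i : Fin m) (ξ : Fin n → ℕ), dd i ξ ≠ 0 →
      φ (piMap s ξ) < φ (piMap s (P i).1))
    (hstr : ∀ i : Fin m,
      bpow b (P i).2 = d i • bpow b (P i).1 + (dd i).sum fun ξ a => a • bpow b ξ)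
    (τ : S → (Fin n → ℕ)) (hτ : ∀ t : S, piMap s (τ t) = t)
    (hLI : LinearIndependent k fun t : S => bpow b (τ t)) :
    Submodule.span k (Set.range fun t : S => bpow b (τ t)) = ⊤ ∧
    ∃ e : RingQuot (relRel k n m c cc P d dd) ≃ₐ[k] A,
      ∀ i : Fin n,
        e (RingQuot.mkAlgHom k (relRel k n m c cc P d dd) (FreeAlgebra.ι k i)) = b i := by
  refine ⟨span_range_bpow_section_eq_top hc hccsupp hcomm hd hddsupp hstr hP hτ hgen, ?_⟩
  set r := relRel k n m c cc P d dd
  obtain ⟨hcommβ, hstrβ⟩ := (forall_relRel_imp_eq_iff (RingQuot.mkAlgHom k r)).mp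
    fun _ _ h => RingQuot.mkAlgHom_rel k h
  let e := RingQuot.liftAlgHom k ⟨FreeAlgebra.lift k b,
    fun _ _ h => (forall_relRel_imp_eq_iff _).mpr (by simpa using ⟨hcomm, hstr⟩) _ _ h⟩
  have he : ∀ i, e (RingQuot.mkAlgHom k r (FreeAlgebra.ι k i)) = b i := fun i =>
    (RingQuot.liftAlgHom_mkAlgHom_apply k _ _ _).trans (FreeAlgebra.lift_ι_apply b i)
  have hspanβ := span_range_bpow_section_eq_top hc hccsupp hcommβ hd hddsupp hstrβ hP hτ
    (adjoin_range_ι_eq_top_of_surjective (RingQuot.mkAlgHom_surjective k r))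
  have hinj : Function.Injective e :=
    injective_of_span_eq_top_of_linearIndependent_comp hspanβ e.toLinearMap
      (by simpa [Function.comp_def, map_bpow, he] using hLI)
  have hsurj : Function.Surjective e := (AlgHom.range_eq_top e).mp <| eq_top_iff.mpr <|
    hgen ▸ Algebra.adjoin_le (by rintro _ ⟨i, rfl⟩; exact ⟨_, he i⟩)
  exact ⟨AlgEquiv.ofBijective e ⟨hinj, hsurj⟩, he⟩

/-- Let `A` be an algebra of `(S,φ)`-type with respect to a
presentation `(π,P)`, and suppose there is a section `τ` of `π` such that the
monomials `{𝐛^{τ(t)} : t ∈ S}` are linearly independent. Then these monomials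
form a basis of `A` (they also span), and `A` is isomorphic, as a `k`-algebra,
to the quotient of the free algebra on `X₁,...,Xₙ` by the ideal generated by
the commutation and straightening relations, via `Xᵢ ↦ bᵢ`. -/
theorem s_phi_type_presentation
    (k : Type) [Field k] (A : Type) [Ring A] [Algebra k A]
    (S : Type) [AddCancelCommMonoid S]
    (n m : ℕ) (s : Fin n → S)
    (hsurj : Function.Surjective (piMap s))
    (hs : Set.range s = {t : S | t ≠ 0 ∧ ∀ x y : S, t = x + y → x = 0 ∨ y = 0})
    (φ : S →+ ℕ) (hφ : ∀ t : S, φ t = 0 → t = 0)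
    (P : Fin m → (Fin n → ℕ) × (Fin n → ℕ))
    (hP : ∀ ξ ν : Fin n → ℕ,
      addConGen (fun a b => ∃ i : Fin m, a = (P i).1 ∧ b = (P i).2) ξ ν ↔
        piMap s ξ = piMap s ν)
    (b : Fin n → A) (hgen : Algebra.adjoin k (Set.range b) = ⊤)
    (c : Fin n → Fin n → k) (hc : ∀ i j : Fin n, c i j ≠ 0)
    (cc : Fin n → Fin n → ((Fin n → ℕ) →₀ k))
    (hccsupp : ∀ (i j : Fin n) (ξ : Fin n → ℕ), cc i j ξ ≠ 0 →
      φ (piMap s ξ) < φ (s i + s j))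
    (hcomm : ∀ i j : Fin n, i < j →
      b j * b i = c i j • (b i * b j) + (cc i j).sum fun ξ a => a • bpow b ξ)
    (d : Fin m → k) (hd : ∀ i, d i ≠ 0)
    (dd : Fin m → ((Fin n → ℕ) →₀ k))
    (hddsupp : ∀ (i : Fin m) (ξ : Fin n → ℕ), dd i ξ ≠ 0 →
      φ (piMap s ξ) < φ (piMap s (P i).1))
    (hstr : ∀ i : Fin m,
      bpow b (P i).2 = d i • bpow b (P i).1 + (dd i).sum fun ξ a => a • bpow b ξ)
    (τ : S → (Fin n → ℕ)) (hτ : ∀ t : S, piMap s (τ t) = t)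
    (hLI : LinearIndependent k fun t : S => bpow b (τ t)) :
    Submodule.span k (Set.range fun t : S => bpow b (τ t)) = ⊤ ∧
    ∃ e : RingQuot (relRel k n m c cc P d dd) ≃ₐ[k] A,
      ∀ i : Fin n,
        e (RingQuot.mkAlgHom k (relRel k n m c cc P d dd) (FreeAlgebra.ι k i)) = b i :=
  s_phi_type_presentation_general k A S n m s φ P hP b hgen c hc cc hccsupp hcomm d hd dd hddsupp
    hstr τ hτ hLI
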